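/- arXiv:0710.4077 — 7 statements merged into one kernel-verified Lean document; each statement's English description precedes it below -/
import Mathlib

section
/- Let G be a group and a, b ∈ G elements such that: (I) the only element commuting with both a and b is the identity; (II) for all x, y, z ∈ G, x²y²z² = 1 implies that x, y, z pairwise commute; (III) G has unique square roots, i.e. x² = y² implies x = y; (IV) for all x ∈ G, [x², a] = 1 implies [x, a] = 1. Then the equation x²·a·x²·a⁻¹·(y·b·y·b⁻¹)⁻² = 1 has only the trivial solution x = 1, y = 1 in G. -/
/-!
Setting `w := y b y b⁻¹`, the equation reads `(x² a)² (a⁻¹)² (w⁻¹)² = 1`, so (II) makes `x² a`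
commute with `a`; hence `x²` and, by (IV), `x` commute with `a`. The equation then becomes
`(x²)² = w²`, so `x² = w` by (III). Now `x² b² ((y b)⁻¹)² = w b² ((y b)⁻¹)² = 1`, and (II) again
makes `x` commute with `b` and `b` with `y`; so `x = 1` by (I), and then `y² = w = x² = 1` gives
`y = 1` by (III).
-/

section

variable {G : Type*} [Group G]

theorem mul_mul_mul_inv_mul_inv_sq_eq_sq_mul_sq_mul_sq (u a w : G) :
    u * a * u * a⁻¹ * (w ^ 2)⁻¹ = (u * a) ^ 2 * a⁻¹ ^ 2 * w⁻¹ ^ 2 := by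
  simp [sq, mul_assoc]

theorem mul_mul_mul_inv_mul_sq_mul_inv_sq_eq_one (y b : G) :
    y * b * y * b⁻¹ * b ^ 2 * (y * b)⁻¹ ^ 2 = 1 := by
  simp [sq, mul_assoc]

theorem commute_mul_self_right_iff {u a : G} : Commute (u * a) a ↔ Commute u a :=
  (IsRightRegular.all a).commute_mul_right_iff.trans Commute.symm_iff

theorem Commute.mul_mul_mul_inv {u a : G} (h : Commute u a) : u * a * u * a⁻¹ = u * u := by
  rw [mul_assoc u, ← h.eq, ← mul_assoc, mul_inv_cancel_right]

theorem Commute.mul_mul_mul_inv_eq_sq {y b : G} (h : Commute b y) : y * b * y * b⁻¹ = y ^ 2 := by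
  rw [mul_assoc y, h.eq, ← mul_assoc, mul_inv_cancel_right, sq]

end

theorem stmt_0 (G : Type*) [Group G] (a b : G)
    (hI : ∀ x : G, Commute x a → Commute x b → x = 1)
    (hII : ∀ x y z : G, x ^ 2 * y ^ 2 * z ^ 2 = 1 →
      Commute x y ∧ Commute x z ∧ Commute y z)
    (hIII : ∀ x y : G, x ^ 2 = y ^ 2 → x = y)
    (hIV : ∀ x : G, Commute (x ^ 2) a → Commute x a) :
    ∀ x y : G, x ^ 2 * a * x ^ 2 * a⁻¹ * ((y * b * y * b⁻¹) ^ 2)⁻¹ = 1 →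
      x = 1 ∧ y = 1 := by
  intro x y h
  set w := y * b * y * b⁻¹ with hw
  rw [mul_mul_mul_inv_mul_inv_sq_eq_sq_mul_sq_mul_sq] at h
  have hx2a : Commute (x ^ 2) a :=
    commute_mul_self_right_iff.mp (Commute.inv_right_iff.mp (hII _ _ _ h).1)
  have hxw : x ^ 2 = w := by
    refine hIII _ _ (mul_inv_eq_one.mp ?_)
    rwa [← mul_mul_mul_inv_mul_inv_sq_eq_sq_mul_sq_mul_sq, hx2a.mul_mul_mul_inv, ← sq] at h
  have hb : x ^ 2 * b ^ 2 * (y * b)⁻¹ ^ 2 = 1 := hxw ▸ mul_mul_mul_inv_mul_sq_mul_inv_sq_eq_one y b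
  obtain ⟨hxb, -, hbyb⟩ := hII _ _ _ hb
  have hx : x = 1 := hI x (hIV x hx2a) hxb
  have hby : Commute b y :=
    (commute_mul_self_right_iff.mp (Commute.inv_right_iff.mp hbyb).symm).symm
  refine ⟨hx, hIII y 1 ?_⟩
  rw [← hby.mul_mul_mul_inv_eq_sq, ← hw, ← hxw, hx]
end

section
/- Let G be a group in which x²y²z² = 1 implies that x, y, z pairwise commute, and suppose G has unique square roots. If x, y, b ∈ G satisfy x² = (yb)²·b⁻², then [x, b] = 1 and [y, b] = 1. -/
open scoped commutatorElement

theorem Commute.of_mul_left_self {G : Type*} [Group G] {a b : G} (h : Commute (a * b) b) :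
    Commute a b := by
  simpa using h.mul_left (Commute.refl b).inv_left

theorem stmt_1_general (G : Type*) [Group G]
    (hII : ∀ x y z : G, x ^ 2 * y ^ 2 * z ^ 2 = 1 →
      Commute x y ∧ Commute x z ∧ Commute y z) :
    ∀ x y b : G, x ^ 2 = (y * b) ^ 2 * (b⁻¹) ^ 2 →
      ⁅x, b⁆ = 1 ∧ ⁅y, b⁆ = 1 := by
  intro x y b h
  have hprod : (y * b) ^ 2 * b⁻¹ ^ 2 * x⁻¹ ^ 2 = 1 := by
    rw [← h]
    group
  obtain ⟨hyb_b, -, hb_x⟩ := hII _ _ _ hprod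
  simp only [commutatorElement_eq_one_iff_commute]
  exact ⟨(Commute.inv_inv_iff.mp hb_x).symm, (Commute.inv_right_iff.mp hyb_b).of_mul_left_self⟩

theorem stmt_1 (G : Type*) [Group G]
    (hII : ∀ x y z : G, x ^ 2 * y ^ 2 * z ^ 2 = 1 →
      Commute x y ∧ Commute x z ∧ Commute y z)
    (hIII : ∀ x y : G, x ^ 2 = y ^ 2 → x = y) :
    ∀ x y b : G, x ^ 2 = (y * b) ^ 2 * (b⁻¹) ^ 2 →
      ⁅x, b⁆ = 1 ∧ ⁅y, b⁆ = 1 :=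
  stmt_1_general G hII
end

section
/- Let G be a group and let g₀, g₁, …, g_r be elements of G such that for each i < r the consecutive elements do not commute ([gᵢ, gᵢ₊₁] ≠ 1), and such that the sequence is 'geodesic' in the non-commutation graph: for all i and j with j ≥ i+2 one has [gᵢ, g_j] = 1 (no shortcut edges). Then the chain of centralizers G > C(g₀) > C(g₀, g₁) > … > C(g₀, …, g_{r-1}) is strictly descending, where C(g₀, …, g_k) denotes the intersection of the centralizers of g₀, …, g_k. -/
/-! Each new vertex of the path is separated from the previous centralizer by the vertex after
it: `g (k + 2)` commutes with `g 0, …, g k` because the path has no shortcuts, but not with its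
neighbour `g (k + 1)`. -/

namespace Subgroup

variable {G : Type*} [Group G]

theorem centralizer_lt_centralizer_of_not_commute {S T : Set G} (hST : S ⊆ T) {x y : G}
    (hx : x ∈ centralizer S) (hy : y ∈ T) (hxy : ¬Commute y x) :
    centralizer T < centralizer S :=
  SetLike.lt_iff_le_and_exists.2 ⟨centralizer_le hST, x, hx, fun h => hxy (h y hy)⟩

theorem centralizer_lt_top_of_not_commute {S : Set G} {x y : G} (hy : y ∈ S)
    (hxy : ¬Commute y x) : centralizer S < ⊤ := by
  have hempty : centralizer (∅ : Set G) = ⊤ := centralizer_eq_top_iff_subset.2 (Set.empty_subset _)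
  rw [← hempty]
  exact centralizer_lt_centralizer_of_not_commute (Set.empty_subset S) (hempty ▸ mem_top x) hy hxy

end Subgroup

open Subgroup in
theorem stmt_4 (G : Type*) [Group G] (r : ℕ) (g : ℕ → G)
    (hadj : ∀ i, i < r → ¬ Commute (g i) (g (i + 1)))
    (hfar : ∀ i j, j ≤ r → i + 2 ≤ j → Commute (g i) (g j)) :
    (1 ≤ r → Subgroup.centralizer {x | ∃ i ≤ 0, x = g i} < ⊤) ∧
    ∀ k, k + 1 < r →
      Subgroup.centralizer {x | ∃ i ≤ k + 1, x = g i} <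
      Subgroup.centralizer {x | ∃ i ≤ k, x = g i} := by
  have mem_prefix {i k : ℕ} (h : i ≤ k) : g i ∈ {x | ∃ j ≤ k, x = g j} := ⟨i, h, rfl⟩
  refine ⟨fun hr => centralizer_lt_top_of_not_commute (mem_prefix le_rfl) (hadj 0 hr),
    fun k hk => centralizer_lt_centralizer_of_not_commute ?_ (x := g (k + 2)) ?_
      (mem_prefix le_rfl) (hadj (k + 1) hk)⟩
  · rintro _ ⟨i, hi, rfl⟩
    exact mem_prefix (hi.trans k.le_succ)
  · rintro _ ⟨i, hi, rfl⟩
    exact hfar i (k + 2) hk (by omega)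
end

section
/- Let G be a group, H a G-group (a group with a distinguished embedded copy of G), and suppose: (a) H is a G-domain, i.e. for all x, y ∈ H with x ≠ 1 ≠ y there exists g ∈ H such that [x, g⁻¹yg] ≠ 1; (b) H is G-separated by G, i.e. for every nontrivial h ∈ H there is a G-homomorphism φ: H → G (restricting to the identity on G) with φ(h) ≠ 1. Then H is G-discriminated by G: for every finite set h₁, …, h_n of nontrivial elements of H there is a single G-homomorphism φ: H → G with φ(hᵢ) ≠ 1 for all i. -/
/-!
Using the domain property repeatedly, nontrivial elements `h₀, …, hₙ` are packed into the single
nontrivial element `w = ⁅h₀, g₀⁻¹ * ⁅h₁, g₁⁻¹ * ⋯ * g₁⁆ * g₀⁆`. A homomorphism killing some `hᵢ`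
kills `w`, since a commutator with a trivial entry is trivial. So a `G`-homomorphism separating
`w` from `1`, which exists by `G`-separation, is nontrivial on every `hᵢ`.
-/

open scoped commutatorElement

section

variable {H K : Type*} [Group H] [Group K]

theorem map_ne_one_of_map_commutatorElement_conj_ne_one (φ : H →* K) {x y g : H}
    (h : φ ⁅x, g⁻¹ * y * g⁆ ≠ 1) : φ x ≠ 1 ∧ φ y ≠ 1 := by
  rw [map_commutatorElement, map_mul, map_mul, map_inv] at h
  refine ⟨fun hx => h ?_, fun hy => h ?_⟩
  · rw [hx, commutatorElement_one_left]
  · rw [hy, mul_one, inv_mul_cancel, commutatorElement_one_right]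

theorem exists_ne_one_forall_map_ne_one
    (hdom : ∀ x y : H, x ≠ 1 → y ≠ 1 → ∃ g : H, ⁅x, g⁻¹ * y * g⁆ ≠ 1) :
    ∀ {n : ℕ} (h : Fin (n + 1) → H), (∀ i, h i ≠ 1) →
      ∃ w : H, w ≠ 1 ∧ ∀ φ : H →* K, φ w ≠ 1 → ∀ i, φ (h i) ≠ 1
  | 0, h, hne => ⟨h 0, hne 0, fun _ hφ i => by rwa [Fin.fin_one_eq_zero i]⟩
  | _ + 1, h, hne => by
    obtain ⟨w, hw, hwφ⟩ :=
      exists_ne_one_forall_map_ne_one hdom (fun i => h i.succ) (fun i => hne i.succ)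
    obtain ⟨g, hg⟩ := hdom (h 0) w (hne 0) hw
    refine ⟨_, hg, fun φ hφ => ?_⟩
    obtain ⟨h0, hφw⟩ := map_ne_one_of_map_commutatorElement_conj_ne_one φ hφ
    exact Fin.cases h0 (hwφ φ hφw)

theorem exists_retraction_of_separated {G : Type*} [Group G] {ι : G →* H}
    (hι : Function.Injective ι)
    (hsep : ∀ h : H, h ≠ 1 → ∃ φ : H →* G, (∀ g : G, φ (ι g) = g) ∧ φ h ≠ 1) :
    ∃ φ : H →* G, ∀ g : G, φ (ι g) = g := by
  cases subsingleton_or_nontrivial H with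
  | inl _ =>
    have := hι.subsingleton
    exact ⟨1, fun _ => Subsingleton.elim _ _⟩
  | inr _ =>
    obtain ⟨x, hx⟩ := exists_ne (1 : H)
    obtain ⟨φ, hφ, -⟩ := hsep x hx
    exact ⟨φ, hφ⟩

end

theorem stmt_9 (G H : Type*) [Group G] [Group H] (ι : G →* H)
    (hι : Function.Injective ι)
    (hdom : ∀ x y : H, x ≠ 1 → y ≠ 1 → ∃ g : H, ⁅x, g⁻¹ * y * g⁆ ≠ 1)
    (hsep : ∀ h : H, h ≠ 1 →
      ∃ φ : H →* G, (∀ g : G, φ (ι g) = g) ∧ φ h ≠ 1) :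
    ∀ (n : ℕ) (h : Fin n → H), (∀ i, h i ≠ 1) →
      ∃ φ : H →* G, (∀ g : G, φ (ι g) = g) ∧ ∀ i, φ (h i) ≠ 1 := by
  intro n h hne
  cases n with
  | zero =>
    obtain ⟨φ, hφ⟩ := exists_retraction_of_separated hι hsep
    exact ⟨φ, hφ, fun i => i.elim0⟩
  | succ n =>
    obtain ⟨w, hw, hwφ⟩ := exists_ne_one_forall_map_ne_one (K := G) hdom h hne
    obtain ⟨φ, hφ, hφw⟩ := hsep w hw
    exact ⟨φ, hφ, hwφ φ hφw⟩
end

section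
/- Let F be a free group and let x, y, z ∈ F satisfy x²y²z² = 1. Then x, y, z pairwise commute; in particular they all lie in a common cyclic subgroup. -/
open scoped commutatorElement

/-!
Put `P = x * y`, `Q = y * z`, `R = y * z * x`. Then `⁅P, Q⁆ * R ^ 2 = x⁻¹ * (x²y²z²) * x`, so the
equation says `R⁻¹ ^ 2 = ⁅P, Q⁆`.

In a free group `s ^ 2 = ⁅u, v⁆` forces `⁅u, v⁆ = 1`. By Nielsen–Schreier the subgroup generated
by `u, v, s` is free; of rank at most one it is cyclic, otherwise it maps to the integer Heisenberg
group so that the composite to `ℤ²` is onto. The relation kills the image of `s` in `ℤ²`, so the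
images of `u, v` generate `ℤ²` and their determinant is `±1`; but in the Heisenberg group it equals
twice the central coordinate of the image of `s`.

So `P`, `Q` commute and, free groups being torsion-free, `R = 1`. Commuting elements of a free
group generate a free abelian, hence cyclic, subgroup, which contains `x = Q⁻¹`, `y = Q * P` and
`z = P⁻¹`.
-/

@[ext]
structure Heisenberg where
  a : ℤ
  b : ℤ
  c : ℤ

namespace Heisenberg

-- `⟨a, b, c⟩` stands for the unitriangular matrix `!![1, a, c; 0, 1, b; 0, 0, 1]`.
instance : Mul Heisenberg := ⟨fun p q => ⟨p.a + q.a, p.b + q.b, p.c + q.c + p.a * q.b⟩⟩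
instance : One Heisenberg := ⟨⟨0, 0, 0⟩⟩
instance : Inv Heisenberg := ⟨fun p => ⟨-p.a, -p.b, -p.c + p.a * p.b⟩⟩

@[simp] lemma mul_a (p q : Heisenberg) : (p * q).a = p.a + q.a := rfl
@[simp] lemma mul_b (p q : Heisenberg) : (p * q).b = p.b + q.b := rfl
@[simp] lemma mul_c (p q : Heisenberg) : (p * q).c = p.c + q.c + p.a * q.b := rfl
@[simp] lemma one_a : (1 : Heisenberg).a = 0 := rfl
@[simp] lemma one_b : (1 : Heisenberg).b = 0 := rfl
@[simp] lemma one_c : (1 : Heisenberg).c = 0 := rfl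
@[simp] lemma inv_a (p : Heisenberg) : p⁻¹.a = -p.a := rfl
@[simp] lemma inv_b (p : Heisenberg) : p⁻¹.b = -p.b := rfl
@[simp] lemma inv_c (p : Heisenberg) : p⁻¹.c = -p.c + p.a * p.b := rfl

instance : Group Heisenberg where
  mul_assoc p q r := by ext <;> simp <;> ring
  one_mul p := by ext <;> simp
  mul_one p := by ext <;> simp
  inv_mul_cancel p := by ext <;> simp

def X : Heisenberg := ⟨1, 0, 0⟩
def Y : Heisenberg := ⟨0, 1, 0⟩

def det (p q : Heisenberg) : ℤ := p.a * q.b - p.b * q.a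

lemma sq_eq (p : Heisenberg) : p ^ 2 = ⟨2 * p.a, 2 * p.b, 2 * p.c + p.a * p.b⟩ := by
  ext <;> simp [pow_two] <;> ring

lemma commutatorElement_eq (p q : Heisenberg) : ⁅p, q⁆ = ⟨0, 0, det p q⟩ := by
  ext <;> simp [commutatorElement_def, det]
  ring

lemma not_commute_X_Y : ¬Commute X Y := by
  intro h
  simpa [X, Y] using congrArg c h.eq

def proj : Heisenberg →* Multiplicative (ℤ × ℤ) where
  toFun p := Multiplicative.ofAdd (p.a, p.b)
  map_one' := rfl
  map_mul' _ _ := rfl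

@[simp] lemma proj_apply (p : Heisenberg) : proj p = Multiplicative.ofAdd (p.a, p.b) := rfl

lemma proj_eq_one_and_two_dvd_det_of_sq_eq_commutatorElement {p q r : Heisenberg}
    (h : r ^ 2 = ⁅p, q⁆) : proj r = 1 ∧ 2 ∣ det p q := by
  rw [sq_eq, commutatorElement_eq] at h
  obtain ⟨ha, hb, hc⟩ := Heisenberg.mk.inj h
  have ha0 : r.a = 0 := by omega
  have hb0 : r.b = 0 := by omega
  refine ⟨?_, r.c, ?_⟩
  · simp [ha0, hb0]
  · rw [← hc, ha0]; ring

theorem sq_ne_commutatorElement_of_closure_eq_top {G : Type*} [Group G] (Ψ : G →* Heisenberg)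
    {g₁ g₂ : G} (h₁ : Ψ g₁ = X) (h₂ : Ψ g₂ = Y) {u v s : G}
    (hgen : Subgroup.closure {u, v, s} = ⊤) : s ^ 2 ≠ ⁅u, v⁆ := by
  intro h
  obtain ⟨hs, hdet⟩ := proj_eq_one_and_two_dvd_det_of_sq_eq_commutatorElement
    (by rw [← map_pow, h, map_commutatorElement] : Ψ s ^ 2 = ⁅Ψ u, Ψ v⁆)
  set φ := proj.comp Ψ
  have hspan (g : G) : ∃ m n : ℤ, φ u ^ m * φ v ^ n = φ g := by
    have hle : Subgroup.closure {u, v, s} ≤ (Subgroup.closure {φ u, φ v}).comap φ := by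
      rw [Subgroup.closure_le]
      rintro _ (rfl | rfl | rfl)
      · exact Subgroup.subset_closure (by simp)
      · exact Subgroup.subset_closure (by simp)
      · exact Subgroup.mem_comap.mpr (hs ▸ one_mem _)
    exact Subgroup.mem_closure_pair.mp (hle (hgen ▸ Subgroup.mem_top g))
  obtain ⟨m₁, n₁, e₁⟩ := hspan g₁
  obtain ⟨m₂, n₂, e₂⟩ := hspan g₂
  simp only [φ, MonoidHom.comp_apply, proj_apply, h₁, h₂, X, Y, ← ofAdd_zsmul, ← ofAdd_add,
    Prod.smul_mk, smul_eq_mul, Prod.mk_add_mk, EmbeddingLike.apply_eq_iff_eq, Prod.mk.injEq]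
    at e₁ e₂
  -- `e₁, e₂` say that `!![m₁, n₁; m₂, n₂]` times the matrix with rows `φ u`, `φ v` is the identity.
  have hunit : det (Ψ u) (Ψ v) * (m₁ * n₂ - m₂ * n₁) = 1 := by
    unfold det
    linear_combination (m₂ * (Ψ u).b + n₂ * (Ψ v).b) * e₁.1 + e₂.2
      - (m₁ * (Ψ u).b + n₁ * (Ψ v).b) * e₂.1
  have : (2 : ℤ) ∣ 1 := hunit ▸ hdet.mul_right (m₁ * n₂ - m₂ * n₁)
  omega

end Heisenberg

namespace IsFreeGroup

variable {G : Type*} [Group G] [IsFreeGroup G]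

theorem isCyclic_of_subsingleton [Subsingleton (Generators G)] : IsCyclic G := by
  have : IsCyclic (FreeGroup (Generators G)) := by
    cases isEmpty_or_nonempty (Generators G)
    · infer_instance
    · have := uniqueOfSubsingleton (Classical.arbitrary (Generators G))
      infer_instance
  exact isCyclic_of_surjective (toFreeGroup G).symm (toFreeGroup G).symm.surjective

theorem isCyclic_or_exists_heisenberg :
    IsCyclic G ∨
      ∃ (Ψ : G →* Heisenberg) (g₁ g₂ : G), Ψ g₁ = Heisenberg.X ∧ Ψ g₂ = Heisenberg.Y := by
  by_cases h : Subsingleton (Generators G)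
  · exact .inl isCyclic_of_subsingleton
  obtain ⟨p, q, hpq⟩ := not_subsingleton_iff_nontrivial.mp h |>.exists_pair_ne
  classical
  refine .inr ⟨lift fun t => if t = p then Heisenberg.X else if t = q then Heisenberg.Y else 1,
    of p, of q, ?_, ?_⟩ <;> simp [lift_of, hpq.symm]

theorem isCyclic_of_isMulCommutative [IsMulCommutative G] : IsCyclic G := by
  obtain hcyc | ⟨Ψ, g₁, g₂, h₁, h₂⟩ := isCyclic_or_exists_heisenberg (G := G)
  · exact hcyc
  · have : Commute g₁ g₂ := isMulCommutative_iff.mp ‹_› g₁ g₂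
    exact absurd (h₁ ▸ h₂ ▸ this.map Ψ) Heisenberg.not_commute_X_Y

theorem commutatorElement_eq_one_of_sq_eq_of_closure_eq_top {u v s : G}
    (hgen : Subgroup.closure {u, v, s} = ⊤) (h : s ^ 2 = ⁅u, v⁆) : ⁅u, v⁆ = 1 := by
  obtain hcyc | ⟨Ψ, g₁, g₂, h₁, h₂⟩ := isCyclic_or_exists_heisenberg (G := G)
  · exact commutatorElement_eq_one_iff_mul_comm.mpr (isMulCommutative_iff.mp inferInstance u v)
  · exact absurd h (Heisenberg.sq_ne_commutatorElement_of_closure_eq_top Ψ h₁ h₂ hgen)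

theorem commutatorElement_eq_one_of_sq_eq {u v s : G} (h : s ^ 2 = ⁅u, v⁆) : ⁅u, v⁆ = 1 := by
  set H := Subgroup.closure {u, v, s}
  have hu : u ∈ H := Subgroup.subset_closure (by simp)
  have hv : v ∈ H := Subgroup.subset_closure (by simp)
  have hs : s ∈ H := Subgroup.subset_closure (by simp)
  have hgen : Subgroup.closure {⟨u, hu⟩, ⟨v, hv⟩, ⟨s, hs⟩} = (⊤ : Subgroup H) := by
    rw [← Subgroup.closure_preimage_eq_top]
    congr 1
    ext
    simp [Subtype.ext_iff]
  have := commutatorElement_eq_one_of_sq_eq_of_closure_eq_top hgen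
    (H.subtype_injective (by simpa [map_commutatorElement] using h))
  simpa [map_commutatorElement] using congrArg H.subtype this

theorem exists_mem_zpowers_of_commute {g₁ g₂ : G} (h : Commute g₁ g₂) :
    ∃ c : G, g₁ ∈ Subgroup.zpowers c ∧ g₂ ∈ Subgroup.zpowers c := by
  set H := Subgroup.closure {g₁, g₂}
  have : IsMulCommutative H := Subgroup.isMulCommutative_closure (by
    rintro _ (rfl | rfl) _ (rfl | rfl)
    exacts [rfl, h.eq, h.symm.eq, rfl])
  obtain ⟨c, hc⟩ := (isCyclic_of_isMulCommutative (G := H)).exists_generator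
  have hmem (x : H) : (x : G) ∈ Subgroup.zpowers (c : G) := by
    obtain ⟨n, hn⟩ := Subgroup.mem_zpowers_iff.mp (hc x)
    exact Subgroup.mem_zpowers_iff.mpr ⟨n, by simp [← hn]⟩
  exact ⟨c, hmem ⟨g₁, Subgroup.subset_closure (by simp)⟩,
    hmem ⟨g₂, Subgroup.subset_closure (by simp)⟩⟩

end IsFreeGroup

theorem inv_sq_eq_commutatorElement_of_sq_mul_sq_mul_sq_eq_one {G : Type*} [Group G]
    {x y z : G} (h : x ^ 2 * y ^ 2 * z ^ 2 = 1) : (y * z * x)⁻¹ ^ 2 = ⁅x * y, y * z⁆ := by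
  have key : ⁅x * y, y * z⁆ * (y * z * x) ^ 2 = x⁻¹ * (x ^ 2 * y ^ 2 * z ^ 2) * x := by
    simp only [commutatorElement_def, sq]
    group
  rw [h, mul_one, inv_mul_cancel, ← eq_inv_iff_mul_eq_one] at key
  rw [key, inv_pow]

theorem commutatorElement_eq_one_of_mem_zpowers {G : Type*} [Group G] {c g₁ g₂ : G}
    (h₁ : g₁ ∈ Subgroup.zpowers c) (h₂ : g₂ ∈ Subgroup.zpowers c) : ⁅g₁, g₂⁆ = 1 := by
  obtain ⟨i, rfl⟩ := Subgroup.mem_zpowers_iff.mp h₁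
  obtain ⟨j, rfl⟩ := Subgroup.mem_zpowers_iff.mp h₂
  exact commutatorElement_eq_one_iff_commute.mpr (Commute.zpow_zpow_self c i j)

theorem stmt_10 (α : Type*) (x y z : FreeGroup α)
    (h : x ^ 2 * y ^ 2 * z ^ 2 = 1) :
    (⁅x, y⁆ = 1 ∧ ⁅x, z⁆ = 1 ∧ ⁅y, z⁆ = 1) ∧
      ∃ c : FreeGroup α, x ∈ Subgroup.zpowers c ∧ y ∈ Subgroup.zpowers c ∧
        z ∈ Subgroup.zpowers c := by
  have hsq := inv_sq_eq_commutatorElement_of_sq_mul_sq_mul_sq_eq_one h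
  have hcomm := IsFreeGroup.commutatorElement_eq_one_of_sq_eq hsq
  have hyzx : y * z * x = 1 := by rwa [hcomm, sq_eq_one, inv_eq_one] at hsq
  obtain ⟨c, hxy, hyz⟩ :=
    IsFreeGroup.exists_mem_zpowers_of_commute (commutatorElement_eq_one_iff_commute.mp hcomm)
  have hx : x ∈ Subgroup.zpowers c := by
    rw [eq_inv_of_mul_eq_one_right hyzx]
    exact inv_mem hyz
  have hy : y ∈ Subgroup.zpowers c := by
    rw [show y = y * z * (x * y) by rw [← mul_assoc, hyzx, one_mul]]
    exact mul_mem hyz hxy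
  have hz : z ∈ Subgroup.zpowers c := by
    have hzxy : z * (x * y) = 1 := by
      rw [← mul_assoc]
      exact mul_eq_one_comm.mp (by rwa [← mul_assoc])
    rw [eq_inv_of_mul_eq_one_left hzxy]
    exact inv_mem hxy
  exact ⟨⟨commutatorElement_eq_one_of_mem_zpowers hx hy,
    commutatorElement_eq_one_of_mem_zpowers hx hz,
    commutatorElement_eq_one_of_mem_zpowers hy hz⟩, c, hx, hy, hz⟩
end

section
/- Let G be a group with elements a, b satisfying axioms (I)-(IV): (I) C(a) ∩ C(b) = 1; (II) x²y²z² = 1 implies pairwise commutation; (III) unique square roots; (IV) [x², a] = 1 implies [x, a] = 1. Suppose additionally there exist a', b' ∈ G such that [x,y] = 1, [x, y^{a'}] = 1, [x, y^{b'}] = 1 together imply x = 1 or y = 1. Then for any s₁, s₂ ∈ G one can express the condition (s₁ ≠ 1 and s₂ ≠ 1) as a single inequation r ≠ 1, and the condition (s₁ ≠ 1 or s₂ ≠ 1) as a single inequation t ≠ 1, where r and t are explicit words in s₁, s₂, a, b, a', b'. Concretely: (s₁ ≠ 1 ∧ s₂ ≠ 1) holds iff NOT every one of [s₁,s₂]=1,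 [s₁,s₂^{a'}]=1, [s₁,s₂^{b'}]=1 holds after combining them into one equation via the conjunction-encoding, and (s₁ ≠ 1 ∨ s₂ ≠ 1) holds iff s₁²·a·s₁²·a⁻¹·(s₂·b·s₂·b⁻¹)⁻² ≠ 1. -/
/-!
Writing `w = t b t b⁻¹`, the equation `malcevE a b s t = 1` reads `s² (a s² a⁻¹) = w²`.
Axiom (II), applied to three regroupings of this equation, gives in turn `[s, w] = 1`,
`[s², a] = 1` and `[s, b] = [b, t] = 1`; (IV) upgrades the second to `[s, a] = 1`, and (III)
yields `w = s²`. Hence `s = 1` by (I), and then `t² = w = 1`, so `t = 1` by (III).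
Thus `malcevE a b` turns a conjunction of two equations into one equation, while the
hypothesis on `a'`, `b'` turns `s₁ = 1 ∨ s₂ = 1` into a conjunction of three commutator
equations.
-/

open scoped commutatorElement

/-- The Malcev-type conjunction-encoding word: `E a b s t = 1` iff `s = 1 ∧ t = 1`
(under axioms (I)-(IV)). -/
def malcevE {G : Type*} [Group G] (a b s t : G) : G :=
  s ^ 2 * a * s ^ 2 * a⁻¹ * ((t * b * t * b⁻¹) ^ 2)⁻¹

section

variable {G : Type*} [Group G]

theorem malcevE_eq_one_iff_sq_mul_conj_eq (a b s t : G) :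
    malcevE a b s t = 1 ↔ s ^ 2 * (a * s ^ 2 * a⁻¹) = (t * b * t * b⁻¹) ^ 2 := by
  rw [malcevE, mul_inv_eq_one]
  simp only [mul_assoc]

theorem commute_of_sq_mul_conj_eq_sq
    (hII : ∀ x y z : G, x ^ 2 * y ^ 2 * z ^ 2 = 1 →
      Commute x y ∧ Commute x z ∧ Commute y z)
    {a s w : G} (h : s ^ 2 * (a * s ^ 2 * a⁻¹) = w ^ 2) : Commute s w := by
  have hsq : s ^ 2 * (a * s * a⁻¹) ^ 2 * w⁻¹ ^ 2 = 1 := by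
    rw [conj_pow, h, inv_pow, mul_inv_cancel]
  exact Commute.inv_right_iff.mp (hII _ _ _ hsq).2.1

theorem commute_sq_of_sq_mul_conj_eq_sq
    (hII : ∀ x y z : G, x ^ 2 * y ^ 2 * z ^ 2 = 1 →
      Commute x y ∧ Commute x z ∧ Commute y z)
    {a s w : G} (h : s ^ 2 * (a * s ^ 2 * a⁻¹) = w ^ 2) : Commute (s ^ 2) a := by
  have hsw : Commute (s ^ 2) (w ^ 2) := (commute_of_sq_mul_conj_eq_sq hII h).pow_pow 2 2
  -- conjugating the equation by `s²`, which commutes with its right-hand side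
  have hconj : a * s ^ 2 * a⁻¹ * s ^ 2 = w ^ 2 := by
    calc a * s ^ 2 * a⁻¹ * s ^ 2 = (s ^ 2)⁻¹ * (s ^ 2 * (a * s ^ 2 * a⁻¹)) * s ^ 2 := by group
      _ = w ^ 2 := by rw [h, mul_assoc, ← hsw.eq, inv_mul_cancel_left]
  have hsq : a ^ 2 * (a⁻¹ * s ^ 2) ^ 2 * w⁻¹ ^ 2 = 1 := by
    calc a ^ 2 * (a⁻¹ * s ^ 2) ^ 2 * w⁻¹ ^ 2 = a * s ^ 2 * a⁻¹ * s ^ 2 * (w ^ 2)⁻¹ := by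
          simp only [sq, mul_inv_rev]; group
      _ = 1 := by rw [hconj, mul_inv_cancel]
  simpa using ((Commute.refl a).mul_right (hII _ _ _ hsq).1).symm

theorem eq_sq_of_sq_mul_conj_eq_sq (hIII : ∀ x y : G, x ^ 2 = y ^ 2 → x = y)
    {a s w : G} (h : s ^ 2 * (a * s ^ 2 * a⁻¹) = w ^ 2) (hsa : Commute (s ^ 2) a) :
    w = s ^ 2 := by
  refine hIII _ _ (h.symm.trans ?_)
  rw [← hsa.eq, mul_inv_cancel_right, sq (s ^ 2)]

theorem commute_of_mul_mul_mul_inv_eq_sq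
    (hII : ∀ x y z : G, x ^ 2 * y ^ 2 * z ^ 2 = 1 →
      Commute x y ∧ Commute x z ∧ Commute y z)
    {b s t : G} (h : t * b * t * b⁻¹ = s ^ 2) : Commute s b ∧ Commute b t := by
  have hsq : s ^ 2 * b ^ 2 * (t * b)⁻¹ ^ 2 = 1 := by
    calc s ^ 2 * b ^ 2 * (t * b)⁻¹ ^ 2 = s ^ 2 * (t * b * t * b⁻¹)⁻¹ := by
          simp only [sq, mul_inv_rev]; group
      _ = 1 := by rw [h, mul_inv_cancel]
  obtain ⟨hsb, -, hbtb⟩ := hII _ _ _ hsq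
  refine ⟨hsb, ?_⟩
  simpa using (Commute.inv_right_iff.mp hbtb).mul_right (Commute.refl b).inv_right

theorem malcevE_eq_one_iff {a b : G}
    (hI : ∀ x : G, Commute x a → Commute x b → x = 1)
    (hII : ∀ x y z : G, x ^ 2 * y ^ 2 * z ^ 2 = 1 →
      Commute x y ∧ Commute x z ∧ Commute y z)
    (hIII : ∀ x y : G, x ^ 2 = y ^ 2 → x = y)
    (hIV : ∀ x : G, Commute (x ^ 2) a → Commute x a)
    (s t : G) : malcevE a b s t = 1 ↔ s = 1 ∧ t = 1 := by
  refine ⟨fun h ↦ ?_, fun ⟨hs, ht⟩ ↦ by simp [malcevE, hs, ht]⟩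
  rw [malcevE_eq_one_iff_sq_mul_conj_eq] at h
  have hs2a := commute_sq_of_sq_mul_conj_eq_sq hII h
  have hw := eq_sq_of_sq_mul_conj_eq_sq hIII h hs2a
  obtain ⟨hsb, hbt⟩ := commute_of_mul_mul_mul_inv_eq_sq hII hw
  have hs : s = 1 := hI s (hIV s hs2a) hsb
  refine ⟨hs, hIII t 1 ?_⟩
  calc t ^ 2 = t * b * t * b⁻¹ := by
        rw [mul_assoc t b t, hbt.eq, ← mul_assoc, mul_inv_cancel_right, sq]
    _ = 1 ^ 2 := by rw [hw, hs]

theorem eq_one_or_eq_one_iff_commutatorElement_eq_one {a' b' : G}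
    (hdom : ∀ x y : G, ⁅x, y⁆ = 1 → ⁅x, a'⁻¹ * y * a'⁆ = 1 →
      ⁅x, b'⁻¹ * y * b'⁆ = 1 → x = 1 ∨ y = 1) (x y : G) :
    x = 1 ∨ y = 1 ↔
      (⁅x, y⁆ = 1 ∧ ⁅x, a'⁻¹ * y * a'⁆ = 1) ∧ ⁅x, b'⁻¹ * y * b'⁆ = 1 := by
  refine ⟨?_, fun ⟨⟨h, ha⟩, hb⟩ ↦ hdom x y h ha hb⟩
  rintro (rfl | rfl) <;> simp

end

theorem stmt_12 (G : Type*) [Group G] (a b a' b' : G)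
    (hI : ∀ x : G, Commute x a → Commute x b → x = 1)
    (hII : ∀ x y z : G, x ^ 2 * y ^ 2 * z ^ 2 = 1 →
      Commute x y ∧ Commute x z ∧ Commute y z)
    (hIII : ∀ x y : G, x ^ 2 = y ^ 2 → x = y)
    (hIV : ∀ x : G, Commute (x ^ 2) a → Commute x a)
    (hdom : ∀ x y : G, ⁅x, y⁆ = 1 → ⁅x, a'⁻¹ * y * a'⁆ = 1 →
      ⁅x, b'⁻¹ * y * b'⁆ = 1 → x = 1 ∨ y = 1) :
    ∀ s₁ s₂ : G,
      ((s₁ ≠ 1 ∧ s₂ ≠ 1) ↔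
        malcevE a b (malcevE a b ⁅s₁, s₂⁆ ⁅s₁, a'⁻¹ * s₂ * a'⁆)
          ⁅s₁, b'⁻¹ * s₂ * b'⁆ ≠ 1) ∧
      ((s₁ ≠ 1 ∨ s₂ ≠ 1) ↔
        s₁ ^ 2 * a * s₁ ^ 2 * a⁻¹ * ((s₂ * b * s₂ * b⁻¹) ^ 2)⁻¹ ≠ 1) := by
  intro s₁ s₂
  have key := malcevE_eq_one_iff hI hII hIII hIV
  constructor
  · rw [← not_or, eq_one_or_eq_one_iff_commutatorElement_eq_one hdom, ← key, ← key]
  · change _ ↔ malcevE a b s₁ s₂ ≠ 1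
    rw [← not_and_or, ← key]
end

section
/- Let G be a group, let D be a positive integer, and suppose every strictly descending chain of centralizers of subsets of G has length at most D (i.e. G has centraliser dimension at most D). Let g₀, …, g_r be elements such that consecutive elements do not commute and non-consecutive elements commute. Then r ≤ D. -/
/-! Let `C_k` be the centralizer of `{g₀, …, g_{k-1}}`. For `k < r`, the element `g_{k+1}`
commutes with `g₀, …, g_{k-1}` but not with `g_k`, so it lies in `C_k` but not in `C_{k+1}`.
Hence `C₀ > C₁ > ⋯ > C_r` is a strict chain of centralizers of length `r`. -/

namespace Subgroup

variable {G ι : Type*} [Group G] [Preorder ι]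

def prefixCentralizer (g : ι → G) (k : ι) : Subgroup G :=
  centralizer (g '' Set.Iio k)

theorem prefixCentralizer_antitone (g : ι → G) : Antitone (prefixCentralizer g) :=
  fun _ _ hkl => centralizer_le (Set.image_mono (Set.Iio_subset_Iio hkl))

theorem mem_prefixCentralizer_iff {g : ι → G} {k : ι} {x : G} :
    x ∈ prefixCentralizer g k ↔ ∀ i < k, Commute (g i) x := by
  simp [prefixCentralizer, mem_centralizer_iff, Commute, SemiconjBy]

theorem prefixCentralizer_lt_of_not_commute {g : ι → G} {k l : ι} {x : G} (hkl : k < l)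
    (hx : x ∈ prefixCentralizer g k) (hxk : ¬ Commute (g k) x) :
    prefixCentralizer g l < prefixCentralizer g k :=
  lt_of_le_not_ge (prefixCentralizer_antitone g hkl.le) fun hle =>
    hxk (mem_prefixCentralizer_iff.mp (hle hx) k hkl)

end Subgroup

theorem stmt_14_general (G : Type*) [Group G] (D : ℕ)
    (hcdim : ∀ (d : ℕ) (C : ℕ → Subgroup G),
      (∀ k ≤ d, ∃ S : Set G, C k = Subgroup.centralizer S) →
      (∀ k, k < d → C (k + 1) < C k) → d ≤ D)
    (r : ℕ) (g : ℕ → G)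
    (hadj : ∀ i, i < r → ¬ Commute (g i) (g (i + 1)))
    (hfar : ∀ i j, j ≤ r → i + 2 ≤ j → Commute (g i) (g j)) :
    r ≤ D := by
  refine hcdim r (Subgroup.prefixCentralizer g) (fun k _ => ⟨_, rfl⟩) fun k hk => ?_
  have hmem : g (k + 1) ∈ Subgroup.prefixCentralizer g k :=
    Subgroup.mem_prefixCentralizer_iff.mpr fun i hi => hfar i (k + 1) hk (by omega)
  exact Subgroup.prefixCentralizer_lt_of_not_commute k.lt_succ_self hmem (hadj k hk)

theorem stmt_14 (G : Type*) [Group G] (D : ℕ) (hD : 0 < D)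
    (hcdim : ∀ (d : ℕ) (C : ℕ → Subgroup G),
      (∀ k ≤ d, ∃ S : Set G, C k = Subgroup.centralizer S) →
      (∀ k, k < d → C (k + 1) < C k) → d ≤ D)
    (r : ℕ) (g : ℕ → G)
    (hadj : ∀ i, i < r → ¬ Commute (g i) (g (i + 1)))
    (hfar : ∀ i j, j ≤ r → i + 2 ≤ j → Commute (g i) (g j)) :
    r ≤ D :=
  stmt_14_general G D hcdim r g hadj hfar
end
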